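/- Let ω_s = (1/2) Σ_{i=2}^{2s−1} (−1)^i e^i ∧ e^{2s+1−i} for 2 ≤ s ≤ ⌊(m+1)/2⌋ in the Chevalley–Eilenberg complex of the filiform Lie algebra 𝔪₀(m). Then each ω_s is closed (dω_s = 0) and lies in Λ²V_{2s−2} but not in Λ²V_{2s−3}. -/

import Mathlib

open Module

namespace CE

variable (L : Type) [LieRing L] [LieAlgebra ℝ L]

/-- The space of alternating `p`-forms on `L` with values in `ℝ`. -/
abbrev Form (p : ℕ) := L [⋀^Fin p]→ₗ[ℝ] ℝ

/-- Alternatization, as a linear map. -/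
noncomputable def altLin (p : ℕ) :
    MultilinearMap ℝ (fun _ : Fin p => L) ℝ →ₗ[ℝ] Form L p where
  toFun := MultilinearMap.alternatization
  map_add' _ _ := map_add _ _ _
  map_smul' c m := by
    ext v
    simp only [MultilinearMap.alternatization_apply, MultilinearMap.domDomCongr_apply,
      MultilinearMap.smul_apply, RingHom.id_apply, AlternatingMap.smul_apply,
      Finset.smul_sum]
    exact Finset.sum_congr rfl fun σ _ => smul_comm _ _ _

/-- Inclusion of alternating maps into multilinear maps, as a linear map. -/
noncomputable def toMulti (p : ℕ) :
    Form L p →ₗ[ℝ] MultilinearMap ℝ (fun _ : Fin p => L) ℝ where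
  toFun f := f.toMultilinearMap
  map_add' _ _ := rfl
  map_smul' _ _ := rfl

attribute [local instance] LieRing.ofAssociativeRing

/-- The Lie bracket of `L` as a bilinear map. -/
noncomputable def bracketL : L →ₗ[ℝ] L →ₗ[ℝ] L :=
  ((LieAlgebra.ad ℝ L).toLinearMap : L →ₗ[ℝ] Module.End ℝ L)

/-- The Chevalley–Eilenberg differential (trivial coefficients):
`(d x)(u₀, …, u_p) = ∑_{i<j} (-1)^{i+j} x([uᵢ, uⱼ], u₀, …, ûᵢ, …, ûⱼ, …, u_p)`,
so that on `1`-forms `(d x)(u, v) = -x ⁅u, v⁆`. -/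
noncomputable def ceDiff : ∀ p : ℕ, Form L p →ₗ[ℝ] Form L (p + 1)
  | 0 => 0
  | (q + 1) =>
    (-(1 : ℝ) / (2 * q.factorial)) •
      ((altLin L (q + 2)).comp
        (((multilinearCurryLeftEquiv ℝ (fun _ : Fin (q + 2) => L) ℝ).symm.toLinearMap).comp
          ((LinearMap.llcomp ℝ L (L →ₗ[ℝ] MultilinearMap ℝ (fun _ : Fin q => L) ℝ)
              (MultilinearMap ℝ (fun _ : Fin (q + 1) => L) ℝ)
              (multilinearCurryLeftEquiv ℝ (fun _ : Fin (q + 1) => L) ℝ).symm.toLinearMap).comp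
            (((LinearMap.lcomp ℝ (L →ₗ[ℝ] MultilinearMap ℝ (fun _ : Fin q => L) ℝ)
                (bracketL L)).comp
              (LinearMap.llcomp ℝ L L (MultilinearMap ℝ (fun _ : Fin q => L) ℝ))).comp
              (((multilinearCurryLeftEquiv ℝ (fun _ : Fin (q + 1) => L) ℝ).toLinearMap).comp
                (toMulti L (q + 1)))))))

/-- The wedge product `β₁ ∧ ⋯ ∧ β_q` of a family of `1`-forms, in determinant
normalization: `(β₁ ∧ ⋯ ∧ β_q)(v₁, …, v_q) = det (βᵢ (v_j))`. -/
noncomputable def wedgeFns {q : ℕ} (β : Fin q → Module.Dual ℝ L) : Form L q :=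
  MultilinearMap.alternatization
    ((MultilinearMap.mkPiAlgebra ℝ (Fin q) ℝ).compLinearMap β)

/-- The subspace `Λ^q V` of `q`-forms spanned by wedges of elements of `V ⊆ 𝔫*`. -/
noncomputable def lambdaPow (V : Submodule ℝ (Module.Dual ℝ L)) (q : ℕ) :
    Submodule ℝ (Form L q) :=
  Submodule.span ℝ
    {x | ∃ β : Fin q → Module.Dual ℝ L, (∀ i, β i ∈ V) ∧ x = wedgeFns L β}

/-- A linear functional viewed as a `1`-form. -/
noncomputable def oneForm : Module.Dual ℝ L →ₗ[ℝ] Form L 1 where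
  toFun x := AlternatingMap.ofSubsingleton ℝ L ℝ (0 : Fin 1) x
  map_add' x y := by ext v; simp
  map_smul' c x := by ext v; simp

/-- The Chevalley–Eilenberg differential on `𝔫* = Λ¹𝔫*`, `(d x)(u,v) = -x ⁅u,v⁆`. -/
noncomputable def dOne : Module.Dual ℝ L →ₗ[ℝ] Form L 2 :=
  (ceDiff L 1).comp (oneForm L)

/-- The `i`-th term `𝔫^i` of the lower central series, as a submodule. -/
noncomputable def lcs (i : ℕ) : Submodule ℝ L :=
  (LieModule.lowerCentralSeries ℝ L L i).toSubmodule

/-- The filtration `V_i = (𝔫^i)°` of `𝔫*` by the annihilators of the lower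
central series. -/
noncomputable def Vfil (i : ℕ) : Submodule ℝ (Module.Dual ℝ L) :=
  (lcs L i).dualAnnihilator

/-- `V_i` for `i : ℤ`, with `V_i = 0` for `i ≤ 0`. -/
noncomputable def VZ (i : ℤ) : Submodule ℝ (Module.Dual ℝ L) := Vfil L i.toNat

/-- `Λ^n V_i` for `i : ℤ`, with the convention coming from the filtration of the
Chevalley–Eilenberg complex: in degree `0` this is `0` for `i ≤ 0` and `ℝ` for `i ≥ 1`. -/
noncomputable def lambdaV (i : ℤ) (n : ℕ) : Submodule ℝ (Form L n) :=
  if i ≤ 0 ∧ n = 0 then ⊥ else lambdaPow L (VZ L i) n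

/-- Wedge product of forms. -/
noncomputable def wedge {a b : ℕ} (x : Form L a) (y : Form L b) : Form L (a + b) :=
  ((LinearMap.mul' ℝ ℝ).compAlternatingMap (x.domCoprod y)).domDomCongr finSumFinEquiv

/-- Cocycles (closed forms). -/
noncomputable def cocycles (n : ℕ) : Submodule ℝ (Form L n) :=
  LinearMap.ker (ceDiff L n)

/-- Coboundaries (exact forms). -/
noncomputable def coboundaries : (n : ℕ) → Submodule ℝ (Form L n)
  | 0 => ⊥
  | (m + 1) => LinearMap.range (ceDiff L m)

/-- Lie algebra cohomology with trivial coefficients `H^n(𝔫) = Z^n/B^n`. -/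
abbrev cohomology (n : ℕ) :=
  @HasQuotient.Quotient ↥(cocycles L n) _ (@Submodule.hasQuotient _ _ _ (Submodule.addCommGroup _) _)
    (Submodule.comap (cocycles L n).subtype (coboundaries L n))

/-- Closed forms in `Λ^n V_i`. -/
noncomputable def Zcl (i : ℤ) (n : ℕ) : Submodule ℝ (Form L n) :=
  lambdaV L i n ⊓ LinearMap.ker (ceDiff L n)

/-- `A^{i,j}_n = {x ∈ Λ^n V_i : dx ∈ Λ^{n+1} V_j}`. -/
noncomputable def Aset (i j : ℤ) (n : ℕ) : Submodule ℝ (Form L n) :=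
  lambdaV L i n ⊓ Submodule.comap (ceDiff L n) (lambdaV L j (n + 1))

/-- Denominator of the limit term of the spectral sequence:
`d({x ∈ Λ^{n-1}𝔫* : dx ∈ Λ^n V_i}) + {x ∈ Λ^n V_{i-1} : dx = 0}`. -/
noncomputable def EinfDen (i : ℤ) : (n : ℕ) → Submodule ℝ (Form L n)
  | 0 => Zcl L (i - 1) 0
  | (m + 1) =>
      Submodule.map (ceDiff L m)
          (Submodule.comap (ceDiff L m) (lambdaV L i (m + 1))) ⊔
        Zcl L (i - 1) (m + 1)

/-- The limit term `E_∞^{p,q}` of the spectral sequence of a `k`-step nilpotent Lie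
algebra: `E_∞^{p,q} = {x ∈ Λ^{p+q}V_{k-p} : dx = 0} /
(d{x ∈ Λ^{p+q-1}𝔫* : dx ∈ Λ^{p+q}V_{k-p}} + {x ∈ Λ^{p+q}V_{k-p-1} : dx = 0})`. -/
abbrev Einf (k : ℕ) (p q : ℤ) :=
  @HasQuotient.Quotient ↥(Zcl L ((k : ℤ) - p) (p + q).toNat) _ (@Submodule.hasQuotient _ _ _ (Submodule.addCommGroup _) _)
    (Submodule.comap (Zcl L ((k : ℤ) - p) (p + q).toNat).subtype
      (EinfDen L ((k : ℤ) - p) (p + q).toNat))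

/-- Numerator `A_r^{p,q}` of the `r`-th page term (for `r = 0` it is `F^pC^{p+q} = Λ^{p+q}V_{k-p}`). -/
noncomputable def ErNum (i : ℤ) (r : ℕ) (n : ℕ) : Submodule ℝ (Form L n) :=
  match r with
  | 0 => lambdaV L i n
  | (r' + 1) => Aset L i (i - (r' + 1)) n

/-- Denominator of the `r`-th page term:
`d(A_{r-1}^{p-r+1,q+r-2}) + A_{r-1}^{p+1,q-1}` for `r ≥ 1`, and `F^{p+1}C^{p+q}` for `r = 0`. -/
noncomputable def ErDen (i : ℤ) (r : ℕ) (n : ℕ) : Submodule ℝ (Form L n) :=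
  match r, n with
  | 0, n => lambdaV L (i - 1) n
  | (r' + 1), 0 => Aset L (i - 1) (i - (r' + 1)) 0
  | (r' + 1), (m + 1) =>
      Submodule.map (ceDiff L m)
          (lambdaV L (i + (r' + 1) - 1) m ⊓
            Submodule.comap (ceDiff L m) (lambdaV L i (m + 1))) ⊔
        Aset L (i - 1) (i - (r' + 1)) (m + 1)

/-- The term `E_r^{p,q}` of the spectral sequence of a `k`-step nilpotent Lie algebra. -/
abbrev Er (k r : ℕ) (p q : ℤ) :=
  @HasQuotient.Quotient ↥(ErNum L ((k : ℤ) - p) r (p + q).toNat) _ (@Submodule.hasQuotient _ _ _ (Submodule.addCommGroup _) _)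
    (Submodule.comap (ErNum L ((k : ℤ) - p) r (p + q).toNat).subtype
      (ErDen L ((k : ℤ) - p) r (p + q).toNat))

end CE

/-!
Let `f₀, …, f_{m-1}` be the basis of `L` dual to `e` (indices shifted down by one from the
paper). The structure equations say that the only nonzero brackets are `⁅f₀, f_b⁆ = -f_{b+1}`
for `b ≥ 1` (with `f_m = 0`), and `ω(f_p, f_q) = (-1)^(p+1)` if `p + q = 2s - 1` with `p, q ≥ 1`,
and `0` otherwise. Hence `dω(f₀, f_b, f_c) = ω(f_{b+1}, f_c) - ω(f_{c+1}, f_b)`, which vanishes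
because `b + c = 2s - 2` forces `b ≡ c (mod 2)`; all other basis triples are trivial.

For the filtration, `e_k` kills `𝔫^j` whenever `k ≤ j` (induction on `j` through the structure
equations), so `ω ∈ Λ²V_{2s-2}`. Conversely `f_{2s-2} = ±(ad f₀)^{2s-3} f₁ ∈ 𝔫^{2s-3}`, and every
form in `Λ²V_{2s-3}` vanishes as soon as one argument lies in `𝔫^{2s-3}`, whereas
`ω(f₁, f_{2s-2}) = 1`.
-/

lemma neg_one_pow_eq_of_mod_two_eq {R : Type*} [Monoid R] [HasDistribNeg R] {a b : ℕ}
    (h : a % 2 = b % 2) : (-1 : R) ^ a = (-1) ^ b :=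
  neg_one_pow_congr (by simp only [Nat.even_iff, h])

namespace CE

variable {L : Type} [LieRing L] [LieAlgebra ℝ L]

lemma ceDiff_succ_apply (q : ℕ) (x : Form L (q + 1)) (v : Fin (q + 2) → L) :
    ceDiff L (q + 1) x v = (-(1 : ℝ) / (2 * q.factorial)) •
      ∑ σ : Equiv.Perm (Fin (q + 2)), (Equiv.Perm.sign σ : ℝ) •
        x (Fin.cons ⁅v (σ 0), v (σ 1)⁆ fun i => v (σ i.succ.succ)) := by
  simp only [ceDiff, LinearMap.smul_apply, AlternatingMap.smul_apply, LinearMap.coe_comp,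
    Function.comp_apply, altLin, LinearMap.coe_mk, AddHom.coe_mk,
    MultilinearMap.alternatization_apply, MultilinearMap.domDomCongr_apply]
  congr 1
  refine Finset.sum_congr rfl fun σ _ => ?_
  rw [Int.cast_smul_eq_zsmul, ← Units.smul_def]
  rfl

lemma form_sum_apply {n : ℕ} {ι : Type*} (t : Finset ι) (g : ι → Form L n)
    (v : Fin n → L) :
    (∑ i ∈ t, g i) v = ∑ i ∈ t, g i v :=
  map_sum (AddMonoidHom.mk' (fun x : Form L n => x v) fun _ _ => rfl) g t

lemma univ_perm_fin_two : (Finset.univ : Finset (Equiv.Perm (Fin 2))) = {1, Equiv.swap 0 1} := by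
  decide

lemma form_two_neg_left (x : Form L 2) (u v : L) : x ![-u, v] = -x ![u, v] := by
  have h (w : L) : ![w, v] = Function.update ![u, v] 0 w := by
    ext i; fin_cases i <;> rfl
  rw [h (-u), x.map_update_neg, ← h u]

lemma form_two_zero_left (x : Form L 2) (v : L) : x ![0, v] = 0 :=
  x.map_coord_zero 0 rfl

lemma dOne_apply (x : Dual ℝ L) (u v : L) : dOne L x ![u, v] = -x ⁅u, v⁆ := by
  rw [dOne, LinearMap.comp_apply, ceDiff_succ_apply, univ_perm_fin_two,
    Finset.sum_pair (by decide)]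
  have hskew : x ⁅v, u⁆ = -x ⁅u, v⁆ := by rw [← lie_skew, map_neg]
  simp only [oneForm, LinearMap.coe_mk, AddHom.coe_mk, AlternatingMap.ofSubsingleton_apply_apply]
  simp [Equiv.swap_apply_def]
  linear_combination (1 / 2 : ℝ) * hskew

lemma wedgeFns_two_apply (a b : Dual ℝ L) (u v : L) :
    wedgeFns L ![a, b] ![u, v] = a u * b v - a v * b u := by
  rw [wedgeFns, MultilinearMap.alternatization_apply, univ_perm_fin_two,
    Finset.sum_pair (by decide)]
  simp [Equiv.swap_apply_def]
  ring

lemma univ_perm_fin_three : (Finset.univ : Finset (Equiv.Perm (Fin 3))) =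
    {1, Equiv.swap 0 1, Equiv.swap 0 2, Equiv.swap 1 2,
      Equiv.swap 0 1 * Equiv.swap 1 2, Equiv.swap 1 2 * Equiv.swap 0 1} := by
  decide

lemma ceDiff_two_apply (x : Form L 2) (u v w : L) :
    ceDiff L 2 x ![u, v, w] = -(x ![⁅u, v⁆, w] - x ![⁅u, w⁆, v] + x ![⁅v, w⁆, u]) := by
  rw [ceDiff_succ_apply, univ_perm_fin_three, Finset.sum_insert (by decide),
    Finset.sum_insert (by decide), Finset.sum_insert (by decide), Finset.sum_insert (by decide),
    Finset.sum_pair (by decide)]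
  have hcons : ∀ (a : L) (f : Fin 1 → L), (Fin.cons a f : Fin 2 → L) = ![a, f 0] := by
    intro a f; ext i; fin_cases i <;> rfl
  have hskew (a b c : L) : x ![⁅b, a⁆, c] = -x ![⁅a, b⁆, c] := by
    rw [← lie_skew, form_two_neg_left]
  simp [hcons, Equiv.swap_apply_def, Equiv.Perm.sign_mul]
  linear_combination (1 / 2 : ℝ) * hskew u v w + (1 / 2 : ℝ) * hskew v w u -
    (1 / 2 : ℝ) * hskew u w v

lemma wedgeFns_apply_eq_zero {q : ℕ} {β : Fin q → Dual ℝ L} {v : Fin q → L} (i : Fin q)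
    (hv : ∀ j, β j (v i) = 0) : wedgeFns L β v = 0 := by
  rw [wedgeFns, MultilinearMap.alternatization_apply]
  refine Finset.sum_eq_zero fun σ _ => ?_
  rw [MultilinearMap.domDomCongr_apply, MultilinearMap.compLinearMap_apply,
    MultilinearMap.map_coord_zero _ (σ.symm i) (by simp [hv]), smul_zero]

lemma apply_eq_zero_of_mem_lambdaPow {V : Submodule ℝ (Dual ℝ L)} {q : ℕ} {x : Form L q}
    (hx : x ∈ lambdaPow L V q) {v : Fin q → L} (i : Fin q) (hv : ∀ β ∈ V, β (v i) = 0) :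
    x v = 0 := by
  induction hx using Submodule.span_induction with
  | mem _ h =>
    obtain ⟨β, hβ, rfl⟩ := h
    exact wedgeFns_apply_eq_zero i fun j => hv _ (hβ j)
  | zero => rfl
  | add _ _ _ _ hx hy => rw [AlternatingMap.add_apply, hx, hy, add_zero]
  | smul _ _ _ hx => rw [AlternatingMap.smul_apply, hx, smul_zero]

lemma mem_Vfil_succ_of_lie_eq_zero {x : Dual ℝ L} {j : ℕ}
    (hx : ∀ u : L, ∀ v ∈ lcs L j, x ⁅u, v⁆ = 0) : x ∈ Vfil L (j + 1) := by
  rw [Vfil, Submodule.mem_dualAnnihilator, lcs, LieModule.lowerCentralSeries_succ,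
    LieSubmodule.lieIdeal_oper_eq_linear_span]
  refine fun w hw => (Submodule.span_le (p := LinearMap.ker x)).mpr ?_ hw
  rintro _ ⟨u, v, rfl⟩
  exact hx u v v.2

variable {m : ℕ}

/- `coframe e k` is the paper's `e^{k+1}`; both families are extended by zero past `m`, so the
index arithmetic of `𝔪₀(m)` needs no bound proofs. -/
noncomputable def coframe (e : Basis (Fin m) ℝ (Dual ℝ L)) (k : ℕ) : Dual ℝ L :=
  if h : k < m then e ⟨k, h⟩ else 0

lemma coframe_of_lt (e : Basis (Fin m) ℝ (Dual ℝ L)) {k : ℕ} (hk : k < m) :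
    coframe e k = e ⟨k, hk⟩ :=
  dif_pos hk

/- The structure equations `de⁰ = de¹ = 0`, `deᵏ = e⁰ ∧ eᵏ⁻¹` (0-indexed), read through
`(dx)(u, v) = -x ⁅u, v⁆`. -/
def IsFiliformCoframe (e : Basis (Fin m) ℝ (Dual ℝ L)) : Prop :=
  ∀ k < m, ∀ u v : L, coframe e k ⁅u, v⁆ =
    if 2 ≤ k then coframe e 0 v * coframe e (k - 1) u - coframe e 0 u * coframe e (k - 1) v
    else 0

lemma isFiliformCoframe_of_dOne {e : Basis (Fin m) ℝ (Dual ℝ L)}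
    (hd0 : dOne L (coframe e 0) = 0) (hd1 : dOne L (coframe e 1) = 0)
    (hds : ∀ k, 2 ≤ k → k < m →
      dOne L (coframe e k) = wedgeFns L ![coframe e 0, coframe e (k - 1)]) :
    IsFiliformCoframe e := by
  intro k hk u v
  rw [← neg_neg (coframe e k ⁅u, v⁆), ← dOne_apply]
  split_ifs with h2
  · rw [hds k h2 hk, wedgeFns_two_apply]
    ring
  · obtain rfl | rfl : k = 0 ∨ k = 1 := by omega
    · rw [hd0, AlternatingMap.zero_apply, neg_zero]
    · rw [hd1, AlternatingMap.zero_apply, neg_zero]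

lemma coframe_mem_Vfil {e : Basis (Fin m) ℝ (Dual ℝ L)} (he : IsFiliformCoframe e) {j k : ℕ}
    (hj : 1 ≤ j) (hk : k ≤ j) : coframe e k ∈ Vfil L j := by
  induction j generalizing k with
  | zero => omega
  | succ j ih =>
    refine mem_Vfil_succ_of_lie_eq_zero fun u v hv => ?_
    by_cases hkm : k < m
    · rw [he k hkm]
      split_ifs with h2
      · have hvanish : ∀ i ≤ j, coframe e i v = 0 := fun i hi =>
          (Submodule.mem_dualAnnihilator _).mp (ih (by omega) hi) v hv
        rw [hvanish 0 (by omega), hvanish (k - 1) (by omega)]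
        ring
      · rfl
    · rw [coframe, dif_neg hkm, LinearMap.zero_apply]

noncomputable def omegaForm (e : Basis (Fin m) ℝ (Dual ℝ L)) (s : ℕ) : Form L 2 :=
  (1 / 2 : ℝ) • ∑ i ∈ Finset.Icc 2 (2 * s - 1),
    (-1 : ℝ) ^ i • wedgeFns L ![coframe e (i - 1), coframe e (2 * s - i)]

lemma omegaForm_mem_lambdaPow {e : Basis (Fin m) ℝ (Dual ℝ L)} (he : IsFiliformCoframe e)
    {s : ℕ} (hs : 2 ≤ s) : omegaForm e s ∈ lambdaPow L (Vfil L (2 * s - 2)) 2 := by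
  refine Submodule.smul_mem _ _ (Submodule.sum_mem _ fun i hi => Submodule.smul_mem _ _ ?_)
  have hi := Finset.mem_Icc.mp hi
  refine Submodule.subset_span ⟨_, fun j => ?_, rfl⟩
  fin_cases j
  · exact coframe_mem_Vfil (k := i - 1) he (by omega) (by omega)
  · exact coframe_mem_Vfil (k := 2 * s - i) he (by omega) (by omega)

section FiniteDimensional

variable [FiniteDimensional ℝ L]

noncomputable def frameBasis (e : Basis (Fin m) ℝ (Dual ℝ L)) : Basis (Fin m) ℝ L :=
  e.dualBasis.map (evalEquiv ℝ L).symm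

noncomputable def frame (e : Basis (Fin m) ℝ (Dual ℝ L)) (k : ℕ) : L :=
  if h : k < m then frameBasis e ⟨k, h⟩ else 0

variable {e : Basis (Fin m) ℝ (Dual ℝ L)}

lemma frameBasis_apply (j : Fin m) : frameBasis e j = frame e j := by
  rw [frame, dif_pos j.isLt]

lemma coframe_frame (i j : ℕ) : coframe e i (frame e j) = if i = j ∧ j < m then 1 else 0 := by
  unfold coframe frame
  split_ifs <;> simp_all [frameBasis]

lemma ext_of_coframe (e : Basis (Fin m) ℝ (Dual ℝ L)) {x y : L}
    (h : ∀ k < m, coframe e k x = coframe e k y) : x = y := by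
  refine (evalEquiv ℝ L).injective (e.ext fun k => ?_)
  simpa [coframe_of_lt e k.isLt] using h k k.isLt

lemma lie_frame_frame_of_pos (he : IsFiliformCoframe e) {a b : ℕ} (ha : 0 < a) (hb : 0 < b) :
    ⁅frame e a, frame e b⁆ = 0 := by
  refine ext_of_coframe e fun k hk => ?_
  rw [he k hk, map_zero]
  simp only [coframe_frame]
  split_ifs <;> first | omega | ring

lemma lie_frame_zero_frame (he : IsFiliformCoframe e) {b : ℕ} (hb : 0 < b) :
    ⁅frame e 0, frame e b⁆ = -frame e (b + 1) := by
  refine ext_of_coframe e fun k hk => ?_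
  rw [he k hk, map_neg]
  simp only [coframe_frame, true_and]
  split_ifs <;> first | omega | norm_num

lemma lie_frame_frame_zero (he : IsFiliformCoframe e) {a : ℕ} (ha : 0 < a) :
    ⁅frame e a, frame e 0⁆ = frame e (a + 1) := by
  rw [← lie_skew, lie_frame_zero_frame he ha, neg_neg]

lemma frame_succ_mem_lcs (he : IsFiliformCoframe e) (t : ℕ) : frame e (t + 1) ∈ lcs L t := by
  induction t with
  | zero => exact Submodule.mem_top
  | succ t ih =>
    rw [lcs, LieModule.lowerCentralSeries_succ, LieSubmodule.lieIdeal_oper_eq_linear_span,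
      ← neg_neg (frame e _), ← lie_frame_zero_frame he t.succ_pos]
    exact Submodule.neg_mem _ (Submodule.subset_span ⟨⟨_, trivial⟩, ⟨_, ih⟩, rfl⟩)

lemma omegaForm_apply_frame {s : ℕ} (hs : 2 * s ≤ m + 1) (p q : ℕ) :
    omegaForm e s ![frame e p, frame e q] =
      if p + q = 2 * s - 1 ∧ 0 < p ∧ 0 < q then (-1) ^ (p + 1) else 0 := by
  rw [omegaForm, AlternatingMap.smul_apply, form_sum_apply]
  simp only [AlternatingMap.smul_apply, wedgeFns_two_apply, coframe_frame, smul_eq_mul]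
  split_ifs with hpq
  · have hterm : ∀ i ∈ Finset.Icc 2 (2 * s - 1),
        (-1 : ℝ) ^ i * ((if i - 1 = p ∧ p < m then 1 else 0) *
            (if 2 * s - i = q ∧ q < m then 1 else 0) -
          (if i - 1 = q ∧ q < m then 1 else 0) * (if 2 * s - i = p ∧ p < m then 1 else 0)) =
        (if p + 1 = i then (-1) ^ i else 0) - (if q + 1 = i then (-1) ^ i else 0) := by
      intro i hi
      have := Finset.mem_Icc.mp hi
      split_ifs <;> first | omega | ring
    rw [Finset.sum_congr rfl hterm, Finset.sum_sub_distrib, Finset.sum_ite_eq, Finset.sum_ite_eq,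
      if_pos (Finset.mem_Icc.mpr (by omega)), if_pos (Finset.mem_Icc.mpr (by omega)),
      neg_one_pow_eq_of_mod_two_eq (show (q + 1) % 2 = (p + 1 + 1) % 2 by omega),
      pow_succ _ (p + 1)]
    ring
  · refine mul_eq_zero_of_right _ (Finset.sum_eq_zero fun i hi => ?_)
    have := Finset.mem_Icc.mp hi
    split_ifs <;> first | omega | ring

lemma omegaForm_apply_frame_zero_right {s : ℕ} (hs : 2 * s ≤ m + 1) (p : ℕ) :
    omegaForm e s ![frame e p, frame e 0] = 0 := by
  rw [omegaForm_apply_frame hs, if_neg (by omega)]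

lemma omegaForm_apply_frame_succ_comm {s : ℕ} (hs : 2 * s ≤ m + 1) {b c : ℕ} (hb : 0 < b)
    (hc : 0 < c) :
    omegaForm e s ![frame e (b + 1), frame e c] = omegaForm e s ![frame e (c + 1), frame e b] := by
  rw [omegaForm_apply_frame hs, omegaForm_apply_frame hs]
  by_cases h : b + c + 1 = 2 * s - 1
  · rw [if_pos (by omega), if_pos (by omega),
      neg_one_pow_eq_of_mod_two_eq (show (b + 1 + 1) % 2 = (c + 1 + 1) % 2 by omega)]
  · rw [if_neg (by omega), if_neg (by omega)]

lemma ceDiff_omegaForm_apply_frame (he : IsFiliformCoframe e) {s : ℕ} (hs : 2 * s ≤ m + 1)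
    (a b c : ℕ) : ceDiff L 2 (omegaForm e s) ![frame e a, frame e b, frame e c] = 0 := by
  rw [ceDiff_two_apply]
  -- In the case tags below, `inl` marks an index equal to `0`.
  rcases Nat.eq_zero_or_pos a with rfl | ha <;> rcases Nat.eq_zero_or_pos b with rfl | hb <;>
    rcases Nat.eq_zero_or_pos c with rfl | hc <;>
    simp only [lie_self, lie_frame_zero_frame he, lie_frame_frame_zero he,
      lie_frame_frame_of_pos he, *, form_two_neg_left, form_two_zero_left,
      omegaForm_apply_frame_zero_right hs]
  case inl.inr.inr => linear_combination omegaForm_apply_frame_succ_comm (e := e) hs hb hc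
  case inr.inl.inr => linear_combination -omegaForm_apply_frame_succ_comm (e := e) hs ha hc
  case inr.inr.inl => linear_combination omegaForm_apply_frame_succ_comm (e := e) hs ha hb
  all_goals ring

lemma ceDiff_omegaForm (he : IsFiliformCoframe e) {s : ℕ} (hs : 2 * s ≤ m + 1) :
    ceDiff L 2 (omegaForm e s) = 0 := by
  refine (frameBasis e).ext_alternating fun v _ => ?_
  have hv : (fun i => frameBasis e (v i)) = ![frame e (v 0), frame e (v 1), frame e (v 2)] := by
    ext i; fin_cases i <;> exact frameBasis_apply _
  rw [hv, ceDiff_omegaForm_apply_frame he hs, AlternatingMap.zero_apply]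

lemma omegaForm_notMem_lambdaPow (he : IsFiliformCoframe e) {s : ℕ} (hs : 2 ≤ s)
    (hs' : 2 * s ≤ m + 1) : omegaForm e s ∉ lambdaPow L (Vfil L (2 * s - 3)) 2 := by
  intro hmem
  have hlcs : frame e (2 * s - 2) ∈ lcs L (2 * s - 3) := by
    simpa [show 2 * s - 3 + 1 = 2 * s - 2 by omega] using frame_succ_mem_lcs he (2 * s - 3)
  have hzero := apply_eq_zero_of_mem_lambdaPow hmem (v := ![frame e 1, frame e (2 * s - 2)]) 1
    fun β hβ => (Submodule.mem_dualAnnihilator _).mp hβ _ hlcs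
  rw [omegaForm_apply_frame hs', if_pos (by omega)] at hzero
  norm_num at hzero

end FiniteDimensional

end CE

/-- On `𝔪₀(m)`, for `2 ≤ s ≤ ⌊(m+1)/2⌋`, the `2`-form
`ω_s = ½ ∑_{i=2}^{2s-1} (-1)^i e^i ∧ e^{2s+1-i}` is closed and lies in `Λ²V_{2s-2}` but
not in `Λ²V_{2s-3}`. -/
theorem statement19 (L : Type) [LieRing L] [LieAlgebra ℝ L]
    [FiniteDimensional ℝ L]
    (m : ℕ) (hm2 : 2 ≤ m)
    (e : Basis (Fin m) ℝ (Module.Dual ℝ L))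
    (hd0 : CE.dOne L (e ⟨0, by omega⟩) = 0)
    (hd1 : CE.dOne L (e ⟨1, by omega⟩) = 0)
    (hds : ∀ i : Fin m, 2 ≤ (i : ℕ) →
      CE.dOne L (e i) =
        CE.wedgeFns L ![e ⟨0, by omega⟩, e ⟨(i : ℕ) - 1, by have := i.isLt; omega⟩])
    (s : ℕ) (hs : 2 ≤ s) (hs' : 2 * s ≤ m + 1)
    (ω : CE.Form L 2)
    (hω : ω = (1 / 2 : ℝ) • ∑ i ∈ (Finset.Icc 2 (2 * s - 1)).attach,
      ((-1 : ℝ)) ^ ((i : ℕ)) •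
        CE.wedgeFns L
          ![e ⟨(i : ℕ) - 1, by have := Finset.mem_Icc.mp i.2; omega⟩,
            e ⟨2 * s - (i : ℕ), by have := Finset.mem_Icc.mp i.2; omega⟩]) :
    CE.ceDiff L 2 ω = 0 ∧
      ω ∈ CE.lambdaPow L (CE.Vfil L (2 * s - 2)) 2 ∧
      ω ∉ CE.lambdaPow L (CE.Vfil L (2 * s - 3)) 2 := by
  have he : CE.IsFiliformCoframe e := by
    refine CE.isFiliformCoframe_of_dOne (by rwa [CE.coframe_of_lt e (k := 0) (by omega)])
      (by rwa [CE.coframe_of_lt e (k := 1) (by omega)]) fun k h2 hk => ?_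
    rw [CE.coframe_of_lt e hk, CE.coframe_of_lt e (k := 0) (by omega),
      CE.coframe_of_lt e (k := k - 1) (by omega), hds ⟨k, hk⟩ h2]
  obtain rfl : ω = CE.omegaForm e s := by
    rw [hω, CE.omegaForm, ← Finset.sum_attach (Finset.Icc 2 (2 * s - 1))]
    refine congrArg _ (Finset.sum_congr rfl fun i _ => ?_)
    have hi := Finset.mem_Icc.mp i.2
    rw [CE.coframe_of_lt e (by omega), CE.coframe_of_lt e (by omega)]
  exact ⟨CE.ceDiff_omegaForm he hs', CE.omegaForm_mem_lambdaPow he hs,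
    CE.omegaForm_notMem_lambdaPow he hs hs'⟩
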